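/- Let f : ℝ → ℝ be twice continuously differentiable, even, with f(0) = 0, f''(x) > 0 for all x, f''(s) < f''(t) whenever |t| < |s|, and lim_{|x|→∞} f''(x) = 0. Then the function h(x) = f'(x)/x is strictly decreasing on (0, ∞), and consequently for each η > 2/f''(0) the positive solution x_η of η·f'(x_η) = 2·x_η is unique. -/

import Mathlib

/-!
`f'` vanishes at `0` because `f` is even, and `f'` is strictly concave on `[0, ∞)` because its
derivative `f''` strictly decreases in `|x|`. The slope `f'(x) / x` of the chord of `f'` from the
origin is therefore strictly decreasing on `(0, ∞)`, hence injective, and every positive solution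
of `η f'(x) = 2x` has `f'(x) / x = 2 / η`.
-/

open Set

lemma deriv_zero_of_even {f : ℝ → ℝ} (heven : ∀ x, f x = f (-x)) : deriv f 0 = 0 := by
  have h : deriv f 0 = -deriv f 0 := by
    simpa [← funext heven] using deriv_comp_neg (f := f) (x := 0)
  linarith

lemma strictAntiOn_Ioi_of_abs_lt {φ : ℝ → ℝ} (hφ : ∀ s t, |t| < |s| → φ s < φ t) :
    StrictAntiOn φ (Ioi 0) := fun x hx y hy hxy =>
  hφ y x (by rwa [abs_of_pos hx, abs_of_pos hy])

lemma StrictConcaveOn.strictAntiOn_div_self {g : ℝ → ℝ} (hg : StrictConcaveOn ℝ (Ici 0) g)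
    (hg0 : g 0 = 0) : StrictAntiOn (fun x => g x / x) (Ioi 0) := fun x hx y hy hxy => by
  simpa [hg0] using hg.secant_strict_mono self_mem_Ici (Ioi_subset_Ici_self hx)
    (Ioi_subset_Ici_self hy) (ne_of_gt hx) (ne_of_gt hy) hxy

lemma eq_of_mul_eq_of_strictAntiOn_div_self {g : ℝ → ℝ}
    (hg : StrictAntiOn (fun x => g x / x) (Ioi 0)) {η c a b : ℝ} (hc : c ≠ 0)
    (ha : 0 < a) (hb : 0 < b) (hga : η * g a = c * a) (hgb : η * g b = c * b) : a = b := by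
  have hη : η ≠ 0 := by
    rintro rfl
    exact mul_ne_zero hc ha.ne' (by simpa using hga.symm)
  have slope_eq {x : ℝ} (hx : 0 < x) (hgx : η * g x = c * x) : g x / x = c / η := by
    field_simp
    linarith
  exact hg.injOn ha hb ((slope_eq ha hga).trans (slope_eq hb hgb).symm)

theorem avg_second_deriv_strict_anti_and_unique_solution_general
    (f : ℝ → ℝ) (hf : ContDiff ℝ 2 f)
    (heven : ∀ x : ℝ, f x = f (-x))
    (hstrict : ∀ s t : ℝ, |t| < |s| → deriv (deriv f) s < deriv (deriv f) t) :
    (∀ x y : ℝ, 0 < x → x < y → deriv f y / y < deriv f x / x) ∧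
    (∀ η : ℝ, 2 / deriv (deriv f) 0 < η →
      ∀ a b : ℝ, 0 < a → 0 < b →
        η * deriv f a = 2 * a → η * deriv f b = 2 * b → a = b) := by
  have hconcave : StrictConcaveOn ℝ (Ici 0) (deriv f) :=
    StrictAntiOn.strictConcaveOn_of_deriv (convex_Ici 0)
      (hf.continuous_deriv one_le_two).continuousOn
      (by simpa only [interior_Ici] using strictAntiOn_Ioi_of_abs_lt hstrict)
  have hslope := hconcave.strictAntiOn_div_self (deriv_zero_of_even heven)
  exact ⟨fun x y hx hxy => hslope hx (hx.trans hxy) hxy,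
    fun _ _ a b ha hb hga hgb =>
      eq_of_mul_eq_of_strictAntiOn_div_self hslope two_ne_zero ha hb hga hgb⟩

/-- For strictly subquadratic `f` with `f'' → 0` at infinity, the
function `h x = f' x / x` is strictly decreasing on `(0, ∞)`, and consequently
for each `η > 2 / f''(0)` the positive solution of `η f'(x) = 2x` is unique. -/
theorem avg_second_deriv_strict_anti_and_unique_solution
    (f : ℝ → ℝ) (hf : ContDiff ℝ 2 f)
    (heven : ∀ x : ℝ, f x = f (-x)) (h0 : f 0 = 0)
    (hpos : ∀ x : ℝ, 0 < deriv (deriv f) x)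
    (hstrict : ∀ s t : ℝ, |t| < |s| → deriv (deriv f) s < deriv (deriv f) t)
    (hlim : Filter.Tendsto (deriv (deriv f)) (Filter.cocompact ℝ) (nhds 0)) :
    (∀ x y : ℝ, 0 < x → x < y → deriv f y / y < deriv f x / x) ∧
    (∀ η : ℝ, 2 / deriv (deriv f) 0 < η →
      ∀ a b : ℝ, 0 < a → 0 < b →
        η * deriv f a = 2 * a → η * deriv f b = 2 * b → a = b) :=
  avg_second_deriv_strict_anti_and_unique_solution_general f hf heven hstrict
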